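/- For M ≥ K ≥ 1 and real r > 0 and μ ∈ [0, 1/M], the offline lower bound δ_lb(μ,r) := 1 + K(1−μM)/(Mr) and the achievable NDT δ_ach(μ/α, r) := 1 + (K−1)μ/α + (K/(Mr))·(1 − μM/α) for α > 1 satisfy δ_ach(μ/α, r) − 2·δ_lb(μ,r) ≤ 1/r + (1/α)·(1 − 1/r). -/
import Mathlib


/-- Small-cache regime additive gap:
δ_ach(μ/α,r) − 2·δ_lb(μ,r) ≤ 1/r + (1/α)(1 − 1/r). -/
theorem stmt_2 (M K : ℕ) (r α μ : ℝ)
    (hK : 1 ≤ K) (hMK : K ≤ M) (hr : 0 < r) (hα : 1 < α)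
    (hμ0 : 0 ≤ μ) (hμ1 : μ ≤ 1 / (M : ℝ)) :
    (1 + ((K : ℝ) - 1) * μ / α + ((K : ℝ) / ((M : ℝ) * r)) * (1 - μ * M / α))
      - 2 * (1 + (K : ℝ) * (1 - μ * M) / ((M : ℝ) * r))
      ≤ 1 / r + (1 / α) * (1 - 1 / r) := by
  have hK1 : (1:ℝ) ≤ K := by exact_mod_cast hK
  have hKM : (K:ℝ) ≤ M := by exact_mod_cast hMK
  have hM0 : (0:ℝ) < M := by linarith
  have hα0 : (0:ℝ) < α := by linarith
  have hx : μ * M ≤ 1 := by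
    have := mul_le_mul_of_nonneg_right hμ1 hM0.le
    rwa [one_div, inv_mul_cancel₀ hM0.ne'] at this
  have hMr : (0:ℝ) < M * r := mul_pos hM0 hr
  have h1 : ((K:ℝ) - 1) * μ / α ≤ 1 / α := by
    gcongr
    nlinarith
  have hco : (K:ℝ) / (M * r) ≤ 1 / r := by
    rw [div_le_div_iff₀ hMr hr]
    nlinarith
  have hco0 : 0 ≤ (K:ℝ) / (M * r) := by positivity
  have he : 2 * (μ * M) - 1 - μ * M / α ≤ 1 - 1 / α := by
    have hia : 1 / α ≤ 1 := by rw [div_le_one hα0]; linarith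
    have hia0 : 0 < 1 / α := by positivity
    have : μ * M / α = μ * M * (1 / α) := by ring
    nlinarith
  have key : (K:ℝ) / (M * r) * (2 * (μ * M) - 1 - μ * M / α) ≤ 1 / r * (1 - 1 / α) := by
    rcases le_or_gt (2 * (μ * M) - 1 - μ * M / α) 0 with h | h
    · have : 1 / α ≤ 1 := by rw [div_le_one hα0]; linarith
      have h2 : (K:ℝ) / (M * r) * (2 * (μ * M) - 1 - μ * M / α) ≤ 0 :=
        mul_nonpos_of_nonneg_of_nonpos hco0 h
      have : (0:ℝ) ≤ 1 / r * (1 - 1 / α) := by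
        apply mul_nonneg (by positivity); linarith
      linarith
    · exact mul_le_mul hco he h.le (by positivity)
  have hsplit : (K:ℝ) / (M * r) * (1 - μ * M / α) - 2 * ((K:ℝ) * (1 - μ * M) / (M * r))
      = (K:ℝ) / (M * r) * (2 * (μ * M) - 1 - μ * M / α) := by
    field_simp
    ring
  nlinarith [key, h1, hsplit]
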